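/- arXiv:gr-qc/0302101 — 2 statements merged into one kernel-verified Lean document; each statement's English description precedes it below -/
import Mathlib

section
/- In dimension 4, the Bel tensor is trace-free in its first pair of indices: g^{αβ} B_{αβλμ} = 0. -/
/-- The Bel superenergy tensor
`B_{αβλμ} = R_{αρλσ} R_β{}^ρ{}_μ{}^σ + R_{αρμσ} R_β{}^ρ{}_λ{}^σ
  − (1/2) g_{αβ} R_{ρτλσ} R^{ρτ}{}_μ{}^σ − (1/2) g_{λμ} R_{αρστ} R_β{}^{ρστ}
  + (1/8) g_{αβ} g_{λμ} R_{ρτσν} R^{ρτσν}`,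
written in components, with all indices of the Riemann tensor `R` lowered and
raised by means of the inverse metric `ginv`. -/
noncomputable def Bel {ι : Type*} [Fintype ι] (g ginv : ι → ι → ℝ) (R : ι → ι → ι → ι → ℝ)
    (α β l μ : ι) : ℝ :=
  (∑ ρ, ∑ σ, ∑ ρ', ∑ σ', ginv ρ ρ' * ginv σ σ' *
      (R α ρ l σ * R β ρ' μ σ' + R α ρ μ σ * R β ρ' l σ'))
  - (1/2) * g α β * (∑ ρ, ∑ τ, ∑ σ, ∑ ρ', ∑ τ', ∑ σ',
      ginv ρ ρ' * ginv τ τ' * ginv σ σ' * (R ρ τ l σ * R ρ' τ' μ σ'))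
  - (1/2) * g l μ * (∑ ρ, ∑ σ, ∑ τ, ∑ ρ', ∑ σ', ∑ τ',
      ginv ρ ρ' * ginv σ σ' * ginv τ τ' * (R α ρ σ τ * R β ρ' σ' τ'))
  + (1/8) * g α β * g l μ * (∑ ρ, ∑ τ, ∑ σ, ∑ w, ∑ ρ', ∑ τ', ∑ σ', ∑ w',
      ginv ρ ρ' * ginv τ τ' * ginv σ σ' * ginv w w' * (R ρ τ σ w * R ρ' τ' σ' w'))

/-!
Contracting `B_{αβλμ}` with `g^{αβ}`, each of the two cross terms gives `R_{ρτλσ} R^{ρτ}{}_μ{}^σ`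
(the second one after exchanging the two Riemann factors, using the symmetry of `g^{αβ}`), and
`g^{αβ} g_{αβ} = n` is the dimension. Hence the trace is
`(2 - n/2) R_{ρτλσ} R^{ρτ}{}_μ{}^σ + (n/8 - 1/2) g_{λμ} R_{ρτσν} R^{ρτσν}`,
and both coefficients vanish exactly when `n = 4`.
-/

open Finset

section
variable {ι : Type*} [Fintype ι] (ginv : ι → ι → ℝ) (R : ι → ι → ι → ι → ℝ)

/-- `R_{αρλσ} R_β{}^ρ{}_μ{}^σ` -/
noncomputable def belCross (α β l μ : ι) : ℝ :=
  ∑ ρ, ∑ σ, ∑ ρ', ∑ σ', ginv ρ ρ' * ginv σ σ' * (R α ρ l σ * R β ρ' μ σ')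

/-- `R_{αρστ} R_β{}^{ρστ}` -/
noncomputable def belPair (α β : ι) : ℝ :=
  ∑ ρ, ∑ σ, ∑ τ, ∑ ρ', ∑ σ', ∑ τ',
    ginv ρ ρ' * ginv σ σ' * ginv τ τ' * (R α ρ σ τ * R β ρ' σ' τ')

/-- `R_{ρτλσ} R^{ρτ}{}_μ{}^σ` -/
noncomputable def riemannSq (l μ : ι) : ℝ :=
  ∑ ρ, ∑ τ, ∑ σ, ∑ ρ', ∑ τ', ∑ σ',
    ginv ρ ρ' * ginv τ τ' * ginv σ σ' * (R ρ τ l σ * R ρ' τ' μ σ')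

/-- `R_{ρτσν} R^{ρτσν}` -/
noncomputable def kretschmann : ℝ :=
  ∑ ρ, ∑ τ, ∑ σ, ∑ w, ∑ ρ', ∑ τ', ∑ σ', ∑ w',
    ginv ρ ρ' * ginv τ τ' * ginv σ σ' * ginv w w' * (R ρ τ σ w * R ρ' τ' σ' w')

theorem Bel_eq (g : ι → ι → ℝ) (α β l μ : ι) :
    Bel g ginv R α β l μ = belCross ginv R α β l μ + belCross ginv R α β μ l
      - 1 / 2 * g α β * riemannSq ginv R l μ - 1 / 2 * g l μ * belPair ginv R α β
      + 1 / 8 * g α β * g l μ * kretschmann ginv R := by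
  simp only [Bel, belCross, mul_add, sum_add_distrib]
  rfl

theorem trace_belCross (l μ : ι) :
    ∑ α, ∑ β, ginv α β * belCross ginv R α β l μ = riemannSq ginv R l μ := by
  simp only [belCross, riemannSq, mul_sum, mul_assoc]
  exact sum_congr rfl fun _ _ => sum_comm_cycle.symm

theorem trace_belPair :
    ∑ α, ∑ β, ginv α β * belPair ginv R α β = kretschmann ginv R := by
  simp only [belPair, kretschmann, mul_sum, mul_assoc]
  refine sum_congr rfl fun _ _ => sum_comm.trans (sum_congr rfl fun _ _ => sum_comm_cycle.symm)

theorem belCross_comm (hginv : ∀ a b, ginv a b = ginv b a) (α β l μ : ι) :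
    belCross ginv R α β l μ = belCross ginv R β α μ l := by
  rw [belCross, belCross, sum_comm_cycle]
  refine sum_congr rfl fun ρ' _ => ?_
  rw [sum_comm_cycle]
  refine sum_congr rfl fun σ' _ => sum_congr rfl fun ρ _ => sum_congr rfl fun σ _ => ?_
  rw [hginv ρ, hginv σ]
  ring

theorem trace_belCross_swap (hginv : ∀ a b, ginv a b = ginv b a) (l μ : ι) :
    ∑ α, ∑ β, ginv α β * belCross ginv R α β μ l = riemannSq ginv R l μ := by
  rw [sum_comm, ← trace_belCross]
  exact sum_congr rfl fun β _ => sum_congr rfl fun α _ => by rw [hginv, belCross_comm ginv R hginv]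

theorem trace_metric [DecidableEq ι] {g : ι → ι → ℝ} (hginv : ∀ a b, ginv a b = ginv b a)
    (hinv : ∀ a b, ∑ c, ginv a c * g c b = if a = b then 1 else 0) :
    ∑ α, ∑ β, ginv α β * g α β = Fintype.card ι := by
  rw [sum_comm]
  calc ∑ β, ∑ α, ginv α β * g α β = ∑ _β : ι, (1 : ℝ) :=
        sum_congr rfl fun β _ => by simpa [hginv _ β] using hinv β β
    _ = Fintype.card ι := by simp

theorem trace_Bel [DecidableEq ι] {g : ι → ι → ℝ} (hginv : ∀ a b, ginv a b = ginv b a)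
    (hinv : ∀ a b, ∑ c, ginv a c * g c b = if a = b then 1 else 0) (l μ : ι) :
    ∑ α, ∑ β, ginv α β * Bel g ginv R α β l μ
      = (2 - Fintype.card ι / 2) * riemannSq ginv R l μ
        + (Fintype.card ι / 8 - 1 / 2) * g l μ * kretschmann ginv R := by
  have hterm : ∀ α β, ginv α β * Bel g ginv R α β l μ
      = ginv α β * belCross ginv R α β l μ + ginv α β * belCross ginv R α β μ l
        - 1 / 2 * riemannSq ginv R l μ * (ginv α β * g α β)
        - 1 / 2 * g l μ * (ginv α β * belPair ginv R α β)
        + 1 / 8 * g l μ * kretschmann ginv R * (ginv α β * g α β) := fun α β => by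
    rw [Bel_eq]
    ring
  simp only [hterm, sum_add_distrib, sum_sub_distrib, ← mul_sum, trace_belCross,
    trace_belCross_swap _ _ hginv l μ, trace_belPair, trace_metric _ hginv hinv]
  ring

end

theorem bel_trace_free_general
    (g ginv : Fin 4 → Fin 4 → ℝ) (R : Fin 4 → Fin 4 → Fin 4 → Fin 4 → ℝ)
    (hginv : ∀ a b, ginv a b = ginv b a)
    (hinv : ∀ a b, ∑ c, ginv a c * g c b = if a = b then 1 else 0) :
    ∀ l μ, ∑ α, ∑ β, ginv α β * Bel g ginv R α β l μ = 0 := by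
  intro l μ
  rw [trace_Bel ginv R hginv hinv, Fintype.card_fin]
  ring

/-- In dimension 4 the Bel tensor is trace-free in its first pair of
indices: `g^{αβ} B_{αβλμ} = 0`.  Here `ginv` is the inverse of the metric `g`
(so that `g^{αβ} g_{αβ} = 4` on the four-dimensional index set `Fin 4`). -/
theorem bel_trace_free
    (g ginv : Fin 4 → Fin 4 → ℝ) (R : Fin 4 → Fin 4 → Fin 4 → Fin 4 → ℝ)
    (hg : ∀ a b, g a b = g b a) (hginv : ∀ a b, ginv a b = ginv b a)
    (hinv : ∀ a b, ∑ c, ginv a c * g c b = if a = b then 1 else 0)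
    (hR1 : ∀ a b c d, R a b c d = - R b a c d)
    (hR2 : ∀ a b c d, R a b c d = - R a b d c)
    (hR3 : ∀ a b c d, R a b c d = R c d a b) :
    ∀ l μ, ∑ α, ∑ β, ginv α β * Bel g ginv R α β l μ = 0 :=
  bel_trace_free_general g ginv R hginv hinv
end

section
/- If the spacetime satisfies J_{λμβ} := ∇_λ R_{μβ} − ∇_μ R_{λβ} = 0 (in particular if R_{μν} = Λ g_{μν} for constant Λ, i.e. an Einstein space), then the Bel tensor is divergence-free: ∇_α B^{αβλμ} = 0. -/
/-- The covariant derivative `∇_n B_{αβλμ}` of the Bel tensor, obtained from the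
Leibniz rule applied to its defining formula (the metric being covariantly
constant); `DR n a b c d` stands for `∇_n R_{abcd}`. -/
noncomputable def DBel {ι : Type*} [Fintype ι] (g ginv : ι → ι → ℝ)
    (R : ι → ι → ι → ι → ℝ) (DR : ι → ι → ι → ι → ι → ℝ)
    (n α β l μ : ι) : ℝ :=
  (∑ ρ, ∑ σ, ∑ ρ', ∑ σ', ginv ρ ρ' * ginv σ σ' *
      (DR n α ρ l σ * R β ρ' μ σ' + R α ρ l σ * DR n β ρ' μ σ'
        + DR n α ρ μ σ * R β ρ' l σ' + R α ρ μ σ * DR n β ρ' l σ'))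
  - (1/2) * g α β * (∑ ρ, ∑ τ, ∑ σ, ∑ ρ', ∑ τ', ∑ σ',
      ginv ρ ρ' * ginv τ τ' * ginv σ σ' *
        (DR n ρ τ l σ * R ρ' τ' μ σ' + R ρ τ l σ * DR n ρ' τ' μ σ'))
  - (1/2) * g l μ * (∑ ρ, ∑ σ, ∑ τ, ∑ ρ', ∑ σ', ∑ τ',
      ginv ρ ρ' * ginv σ σ' * ginv τ τ' *
        (DR n α ρ σ τ * R β ρ' σ' τ' + R α ρ σ τ * DR n β ρ' σ' τ'))
  + (1/8) * g α β * g l μ * (∑ ρ, ∑ τ, ∑ σ, ∑ w, ∑ ρ', ∑ τ', ∑ σ', ∑ w',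
      ginv ρ ρ' * ginv τ τ' * ginv σ σ' * ginv w w' *
        (DR n ρ τ σ w * R ρ' τ' σ' w' + R ρ τ σ w * DR n ρ' τ' σ' w'))

/-- `J_{λμβ} = ∇_λ R_{μβ} − ∇_μ R_{λβ}`, where `R_{μβ} = R^α{}_{μαβ}` is the Ricci
tensor, written in terms of `∇R` (`DR n a b c d = ∇_n R_{abcd}`) and the inverse
metric. -/
noncomputable def Jtensor {ι : Type*} [Fintype ι] (ginv : ι → ι → ℝ)
    (DR : ι → ι → ι → ι → ι → ℝ) (l μ β : ι) : ℝ :=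
  ∑ a, ∑ a', ginv a a' * (DR l a' μ a β - DR μ a' l a β)

section Contractions

variable {ι : Type*} [Fintype ι]

/- In index notation: `X_{αρλσ} Y_β{}^ρ{}_μ{}^σ`, `X_{ρτλσ} Y^{ρτ}{}_μ{}^σ`,
`X_{αρστ} Y_β{}^{ρστ}`, `X_{ρτσν} Y^{ρτσν}`, and `R^{xy}{}_{cd}` for `raiseFirstPair`. -/
noncomputable def contractSecondFourth (ginv : ι → ι → ℝ) (X Y : ι → ι → ι → ι → ℝ)
    (α β l μ : ι) : ℝ :=
  ∑ ρ, ∑ σ, ∑ ρ', ∑ σ', ginv ρ ρ' * ginv σ σ' * (X α ρ l σ * Y β ρ' μ σ')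

noncomputable def contractExceptThird (ginv : ι → ι → ℝ) (X Y : ι → ι → ι → ι → ℝ)
    (l μ : ι) : ℝ :=
  ∑ ρ, ∑ τ, ∑ σ, ∑ ρ', ∑ τ', ∑ σ',
    ginv ρ ρ' * ginv τ τ' * ginv σ σ' * (X ρ τ l σ * Y ρ' τ' μ σ')

noncomputable def contractExceptFirst (ginv : ι → ι → ℝ) (X Y : ι → ι → ι → ι → ℝ)
    (α β : ι) : ℝ :=
  ∑ ρ, ∑ σ, ∑ τ, ∑ ρ', ∑ σ', ∑ τ',
    ginv ρ ρ' * ginv σ σ' * ginv τ τ' * (X α ρ σ τ * Y β ρ' σ' τ')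

noncomputable def contractAll (ginv : ι → ι → ℝ) (X Y : ι → ι → ι → ι → ℝ) : ℝ :=
  ∑ ρ, ∑ τ, ∑ σ, ∑ w, ∑ ρ', ∑ τ', ∑ σ', ∑ w',
    ginv ρ ρ' * ginv τ τ' * ginv σ σ' * ginv w w' * (X ρ τ σ w * Y ρ' τ' σ' w')

noncomputable def raiseFirstPair (ginv : ι → ι → ℝ) (R : ι → ι → ι → ι → ℝ) (x y c d : ι) : ℝ :=
  ∑ a, ∑ b, ginv x a * ginv y b * R a b c d

variable {ginv : ι → ι → ℝ} {R : ι → ι → ι → ι → ℝ} {DR : ι → ι → ι → ι → ι → ℝ}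

theorem DBel_eq (g : ι → ι → ℝ) (n α β l μ : ι) :
    DBel g ginv R DR n α β l μ =
      contractSecondFourth ginv (DR n) R α β l μ + contractSecondFourth ginv R (DR n) α β l μ
      + contractSecondFourth ginv (DR n) R α β μ l + contractSecondFourth ginv R (DR n) α β μ l
      - 1/2 * g α β *
          (contractExceptThird ginv (DR n) R l μ + contractExceptThird ginv R (DR n) l μ)
      - 1/2 * g l μ *
          (contractExceptFirst ginv (DR n) R α β + contractExceptFirst ginv R (DR n) α β)
      + 1/8 * g α β * g l μ * (contractAll ginv (DR n) R + contractAll ginv R (DR n)) := by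
  simp only [DBel, contractSecondFourth, contractExceptThird, contractExceptFirst, contractAll,
    mul_add, Finset.sum_add_distrib]

theorem sum_inverse_metric_mul_metric [DecidableEq ι] (g : ι → ι → ℝ)
    (hinv : ∀ a b, ∑ c, ginv a c * g c b = if a = b then 1 else 0) (b : ι) (F : ι → ℝ) :
    ∑ n, ∑ a, ginv n a * (g a b * F n) = F b := by
  simp_rw [← mul_assoc, ← Finset.sum_mul, hinv, ite_mul, one_mul, zero_mul,
    Finset.sum_ite_eq', Finset.mem_univ, if_true]

/-- The contracted second Bianchi identity writes this divergence as `J_{bca}`. -/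
theorem riemann_divergence_eq_zero (hginv : ∀ a b, ginv a b = ginv b a)
    (hDR1 : ∀ n a b c d, DR n a b c d = - DR n b a c d)
    (hDR3 : ∀ n a b c d, DR n a b c d = DR n c d a b)
    (hB2 : ∀ n a b c d, DR n a b c d + DR a b n c d + DR b n a c d = 0)
    (hJ : ∀ l μ β, Jtensor ginv DR l μ β = 0) (a b c : ι) :
    ∑ x, ∑ y, ginv x y * DR x y a b c = 0 := by
  have hbianchi : ∀ x y, DR x y a b c = DR b x c y a - DR c x b y a := fun x y => by
    linarith [hDR3 x y a b c, hB2 x b c y a, hDR1 b c x y a]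
  calc ∑ x, ∑ y, ginv x y * DR x y a b c
      = ∑ y, ∑ x, ginv y x * (DR b x c y a - DR c x b y a) := by
        rw [Finset.sum_comm]
        simp only [hbianchi, hginv]
    _ = 0 := hJ b c a

/-- Contract the second Bianchi identity with `S`: by the antisymmetry of `S`, its first and
third terms agree. -/
theorem two_mul_sum_antisymm_mul_DR (hDR1 : ∀ n a b c d, DR n a b c d = - DR n b a c d)
    (hB2 : ∀ n a b c d, DR n a b c d + DR a b n c d + DR b n a c d = 0)
    {S : ι → ι → ℝ} (hS : ∀ x y, S x y = - S y x) (b c d : ι) :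
    2 * ∑ x, ∑ y, S x y * DR x b y c d = ∑ x, ∑ y, S x y * DR b x y c d := by
  have hcyclic : ∑ x, ∑ y, S x y * DR y x b c d = ∑ x, ∑ y, S x y * DR x b y c d := by
    rw [Finset.sum_comm]
    refine Finset.sum_congr rfl fun x _ => Finset.sum_congr rfl fun y _ => ?_
    rw [hS y x, hDR1 x y b c d, neg_mul_neg]
  have hflip : ∑ x, ∑ y, S x y * DR b y x c d = - ∑ x, ∑ y, S x y * DR b x y c d := by
    simp only [← Finset.sum_neg_distrib]
    refine Finset.sum_congr rfl fun x _ => Finset.sum_congr rfl fun y _ => ?_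
    rw [hDR1 b y x c d, mul_neg]
  have hsum : ∑ x, ∑ y, S x y * (DR x b y c d + DR b y x c d + DR y x b c d) = 0 := by
    simp only [hB2, mul_zero, Finset.sum_const_zero]
  simp only [mul_add, Finset.sum_add_distrib, hcyclic, hflip] at hsum
  linarith

theorem raiseFirstPair_antisymm (hR1 : ∀ a b c d, R a b c d = - R b a c d) (x y c d : ι) :
    raiseFirstPair ginv R x y c d = - raiseFirstPair ginv R y x c d := by
  simp only [raiseFirstPair, ← Finset.sum_neg_distrib]
  rw [Finset.sum_comm]
  refine Finset.sum_congr rfl fun a _ => Finset.sum_congr rfl fun b _ => ?_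
  rw [hR1 a b c d]
  ring

theorem contractExceptThird_comm (hginv : ∀ a b, ginv a b = ginv b a)
    (X Y : ι → ι → ι → ι → ℝ) (l μ : ι) :
    contractExceptThird ginv X Y l μ = contractExceptThird ginv Y X μ l := by
  simp only [contractExceptThird, ← Fintype.sum_prod_type']
  exact Fintype.sum_equiv
    ⟨fun ⟨ρ, τ, σ, ρ', τ', σ'⟩ => (ρ', τ', σ', ρ, τ, σ),
      fun ⟨ρ', τ', σ', ρ, τ, σ⟩ => (ρ, τ, σ, ρ', τ', σ'), fun _ => rfl, fun _ => rfl⟩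
    _ _ fun ⟨ρ, τ, σ, ρ', τ', σ'⟩ => by
      dsimp only [Equiv.coe_fn_mk]; rw [hginv ρ' ρ, hginv τ' τ, hginv σ' σ]; ring

theorem contractAll_comm (hginv : ∀ a b, ginv a b = ginv b a) (X Y : ι → ι → ι → ι → ℝ) :
    contractAll ginv X Y = contractAll ginv Y X := by
  simp only [contractAll, ← Fintype.sum_prod_type']
  exact Fintype.sum_equiv
    ⟨fun ⟨ρ, τ, σ, w, ρ', τ', σ', w'⟩ => (ρ', τ', σ', w', ρ, τ, σ, w),
      fun ⟨ρ', τ', σ', w', ρ, τ, σ, w⟩ => (ρ, τ, σ, w, ρ', τ', σ', w'),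
      fun _ => rfl, fun _ => rfl⟩
    _ _ fun ⟨ρ, τ, σ, w, ρ', τ', σ', w'⟩ => by
      dsimp only [Equiv.coe_fn_mk]; rw [hginv ρ' ρ, hginv τ' τ, hginv σ' σ, hginv w' w]; ring

theorem sum_ginv_mul_contractSecondFourth_eq_zero
    (hdiv : ∀ a b c, ∑ x, ∑ y, ginv x y * DR x y a b c = 0) (Y : ι → ι → ι → ι → ℝ)
    (β l μ : ι) :
    ∑ n, ∑ a, ginv n a * contractSecondFourth ginv (DR n) Y a β l μ = 0 :=
  calc ∑ n, ∑ a, ginv n a * contractSecondFourth ginv (DR n) Y a β l μ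
      = ∑ ρ, ∑ σ, ∑ ρ', ∑ σ',
          ginv ρ ρ' * ginv σ σ' * Y β ρ' μ σ' * ∑ n, ∑ a, ginv n a * DR n a ρ l σ := by
        simp only [contractSecondFourth, Finset.mul_sum, ← Fintype.sum_prod_type']
        exact Fintype.sum_equiv
          ⟨fun ⟨n, a, ρ, σ, ρ', σ'⟩ => (ρ, σ, ρ', σ', n, a),
            fun ⟨ρ, σ, ρ', σ', n, a⟩ => (n, a, ρ, σ, ρ', σ'), fun _ => rfl, fun _ => rfl⟩
          _ _ fun _ => by dsimp only [Equiv.coe_fn_mk]; ring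
    _ = 0 := by simp only [hdiv, mul_zero, Finset.sum_const_zero]

theorem sum_ginv_mul_contractExceptFirst_eq_zero
    (hdiv : ∀ a b c, ∑ x, ∑ y, ginv x y * DR x y a b c = 0) (Y : ι → ι → ι → ι → ℝ)
    (β : ι) :
    ∑ n, ∑ a, ginv n a * contractExceptFirst ginv (DR n) Y a β = 0 :=
  calc ∑ n, ∑ a, ginv n a * contractExceptFirst ginv (DR n) Y a β
      = ∑ ρ, ∑ σ, ∑ τ, ∑ ρ', ∑ σ', ∑ τ', ginv ρ ρ' * ginv σ σ' * ginv τ τ' * Y β ρ' σ' τ' *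
          ∑ n, ∑ a, ginv n a * DR n a ρ σ τ := by
        simp only [contractExceptFirst, Finset.mul_sum, ← Fintype.sum_prod_type']
        exact Fintype.sum_equiv
          ⟨fun ⟨n, a, ρ, σ, τ, ρ', σ', τ'⟩ => (ρ, σ, τ, ρ', σ', τ', n, a),
            fun ⟨ρ, σ, τ, ρ', σ', τ', n, a⟩ => (n, a, ρ, σ, τ, ρ', σ', τ'),
            fun _ => rfl, fun _ => rfl⟩
          _ _ fun _ => by dsimp only [Equiv.coe_fn_mk]; ring
    _ = 0 := by simp only [hdiv, mul_zero, Finset.sum_const_zero]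

theorem sum_ginv_mul_contractSecondFourth_eq_sum_raiseFirstPair
    (hginv : ∀ a b, ginv a b = ginv b a) (Z : ι → ι → ι → ι → ι → ℝ) (β l μ : ι) :
    ∑ n, ∑ a, ginv n a * contractSecondFourth ginv R (Z n) a β l μ
      = ∑ σ, ∑ σ', ginv σ σ' * ∑ x, ∑ y, raiseFirstPair ginv R x y l σ * Z x β y μ σ' := by
  simp only [contractSecondFourth, raiseFirstPair, Finset.mul_sum, Finset.sum_mul,
    ← Fintype.sum_prod_type']
  exact Fintype.sum_equiv
    ⟨fun ⟨n, a, ρ, σ, ρ', σ'⟩ => (σ, σ', n, ρ', a, ρ),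
      fun ⟨σ, σ', n, ρ', a, ρ⟩ => (n, a, ρ, σ, ρ', σ'), fun _ => rfl, fun _ => rfl⟩
    _ _ fun ⟨n, a, ρ, σ, ρ', σ'⟩ => by dsimp only [Equiv.coe_fn_mk]; rw [hginv ρ' ρ]; ring

theorem contractExceptThird_eq_sum_raiseFirstPair (hginv : ∀ a b, ginv a b = ginv b a)
    (Z : ι → ι → ι → ι → ℝ) (l μ : ι) :
    contractExceptThird ginv R Z l μ
      = ∑ σ, ∑ σ', ginv σ σ' * ∑ x, ∑ y, raiseFirstPair ginv R x y l σ * Z x y μ σ' := by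
  simp only [contractExceptThird, raiseFirstPair, Finset.mul_sum, Finset.sum_mul,
    ← Fintype.sum_prod_type']
  exact Fintype.sum_equiv
    ⟨fun ⟨ρ, τ, σ, ρ', τ', σ'⟩ => (σ, σ', ρ', τ', ρ, τ),
      fun ⟨σ, σ', ρ', τ', ρ, τ⟩ => (ρ, τ, σ, ρ', τ', σ'), fun _ => rfl, fun _ => rfl⟩
    _ _ fun ⟨ρ, τ, σ, ρ', τ', σ'⟩ => by
      dsimp only [Equiv.coe_fn_mk]; rw [hginv ρ' ρ, hginv τ' τ]; ring

theorem sum_ginv_mul_contractExceptFirst_eq_sum_raiseFirstPair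
    (hginv : ∀ a b, ginv a b = ginv b a) (Z : ι → ι → ι → ι → ι → ℝ) (β : ι) :
    ∑ n, ∑ a, ginv n a * contractExceptFirst ginv R (Z n) a β
      = ∑ σ, ∑ τ, ∑ σ', ∑ τ', ginv σ σ' * ginv τ τ' *
          ∑ x, ∑ y, raiseFirstPair ginv R x y σ τ * Z x β y σ' τ' := by
  simp only [contractExceptFirst, raiseFirstPair, Finset.mul_sum, Finset.sum_mul,
    ← Fintype.sum_prod_type']
  exact Fintype.sum_equiv
    ⟨fun ⟨n, a, ρ, σ, τ, ρ', σ', τ'⟩ => (σ, τ, σ', τ', n, ρ', a, ρ),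
      fun ⟨σ, τ, σ', τ', n, ρ', a, ρ⟩ => (n, a, ρ, σ, τ, ρ', σ', τ'),
      fun _ => rfl, fun _ => rfl⟩
    _ _ fun ⟨n, a, ρ, σ, τ, ρ', σ', τ'⟩ => by
      dsimp only [Equiv.coe_fn_mk]; rw [hginv ρ' ρ]; ring

theorem contractAll_eq_sum_raiseFirstPair (hginv : ∀ a b, ginv a b = ginv b a)
    (Z : ι → ι → ι → ι → ℝ) :
    contractAll ginv R Z
      = ∑ σ, ∑ τ, ∑ σ', ∑ τ', ginv σ σ' * ginv τ τ' *
          ∑ x, ∑ y, raiseFirstPair ginv R x y σ τ * Z x y σ' τ' := by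
  simp only [contractAll, raiseFirstPair, Finset.mul_sum, Finset.sum_mul,
    ← Fintype.sum_prod_type']
  exact Fintype.sum_equiv
    ⟨fun ⟨ρ, τ, σ, w, ρ', τ', σ', w'⟩ => (σ, w, σ', w', ρ', τ', ρ, τ),
      fun ⟨σ, w, σ', w', ρ', τ', ρ, τ⟩ => (ρ, τ, σ, w, ρ', τ', σ', w'),
      fun _ => rfl, fun _ => rfl⟩
    _ _ fun ⟨ρ, τ, σ, w, ρ', τ', σ', w'⟩ => by
      dsimp only [Equiv.coe_fn_mk]; rw [hginv ρ' ρ, hginv τ' τ]; ring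

theorem sum_ginv_mul_contractSecondFourth_eq_half (hginv : ∀ a b, ginv a b = ginv b a)
    (hR1 : ∀ a b c d, R a b c d = - R b a c d) (hDR1 : ∀ n a b c d, DR n a b c d = - DR n b a c d)
    (hB2 : ∀ n a b c d, DR n a b c d + DR a b n c d + DR b n a c d = 0) (β l μ : ι) :
    ∑ n, ∑ a, ginv n a * contractSecondFourth ginv R (DR n) a β l μ
      = 1/2 * contractExceptThird ginv R (DR β) l μ := by
  have hhalf := fun c d b e f =>
    two_mul_sum_antisymm_mul_DR hDR1 hB2 (raiseFirstPair_antisymm (ginv := ginv) hR1 · · c d) b e f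
  simp only [sum_ginv_mul_contractSecondFourth_eq_sum_raiseFirstPair hginv,
    contractExceptThird_eq_sum_raiseFirstPair hginv, ← hhalf, Finset.mul_sum]
  ring_nf

theorem sum_ginv_mul_contractExceptFirst_eq_half (hginv : ∀ a b, ginv a b = ginv b a)
    (hR1 : ∀ a b c d, R a b c d = - R b a c d) (hDR1 : ∀ n a b c d, DR n a b c d = - DR n b a c d)
    (hB2 : ∀ n a b c d, DR n a b c d + DR a b n c d + DR b n a c d = 0) (β : ι) :
    ∑ n, ∑ a, ginv n a * contractExceptFirst ginv R (DR n) a β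
      = 1/2 * contractAll ginv R (DR β) := by
  have hhalf := fun c d b e f =>
    two_mul_sum_antisymm_mul_DR hDR1 hB2 (raiseFirstPair_antisymm (ginv := ginv) hR1 · · c d) b e f
  simp only [sum_ginv_mul_contractExceptFirst_eq_sum_raiseFirstPair hginv,
    contractAll_eq_sum_raiseFirstPair hginv, ← hhalf, Finset.mul_sum]
  ring_nf

theorem sum_ginv_mul_DBel_eq [DecidableEq ι] (g : ι → ι → ℝ)
    (hinv : ∀ a b, ∑ c, ginv a c * g c b = if a = b then 1 else 0) (β l μ : ι) :
    ∑ n, ∑ a, ginv n a * DBel g ginv R DR n a β l μ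
      = ∑ n, ∑ a, ginv n a *
          (contractSecondFourth ginv (DR n) R a β l μ + contractSecondFourth ginv R (DR n) a β l μ
            + contractSecondFourth ginv (DR n) R a β μ l
            + contractSecondFourth ginv R (DR n) a β μ l)
        - 1/2 * (contractExceptThird ginv (DR β) R l μ + contractExceptThird ginv R (DR β) l μ)
        - 1/2 * g l μ * ∑ n, ∑ a, ginv n a *
            (contractExceptFirst ginv (DR n) R a β + contractExceptFirst ginv R (DR n) a β)
        + 1/8 * g l μ * (contractAll ginv (DR β) R + contractAll ginv R (DR β)) := by
  rw [← sum_inverse_metric_mul_metric g hinv β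
      (fun n => contractExceptThird ginv (DR n) R l μ + contractExceptThird ginv R (DR n) l μ),
    ← sum_inverse_metric_mul_metric g hinv β
      (fun n => contractAll ginv (DR n) R + contractAll ginv R (DR n))]
  simp only [Finset.mul_sum, ← Finset.sum_sub_distrib, ← Finset.sum_add_distrib]
  refine Finset.sum_congr rfl fun n _ => Finset.sum_congr rfl fun a _ => ?_
  rw [DBel_eq]
  ring

end Contractions

theorem bel_divergence_free_of_J_zero_general
    (g ginv : Fin 4 → Fin 4 → ℝ) (R : Fin 4 → Fin 4 → Fin 4 → Fin 4 → ℝ)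
    (DR : Fin 4 → Fin 4 → Fin 4 → Fin 4 → Fin 4 → ℝ)
    (hginv : ∀ a b, ginv a b = ginv b a)
    (hinv : ∀ a b, ∑ c, ginv a c * g c b = if a = b then 1 else 0)
    (hR1 : ∀ a b c d, R a b c d = - R b a c d)
    (hDR1 : ∀ n a b c d, DR n a b c d = - DR n b a c d)
    (hDR3 : ∀ n a b c d, DR n a b c d = DR n c d a b)
    (hB2 : ∀ n a b c d, DR n a b c d + DR a b n c d + DR b n a c d = 0)
    (hJ : ∀ l μ β, Jtensor ginv DR l μ β = 0) :
    ∀ β l μ, ∑ α, ∑ α', ginv α α' * DBel g ginv R DR α α' β l μ = 0 := by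
  intro β l μ
  have hdiv := riemann_divergence_eq_zero hginv hDR1 hDR3 hB2 hJ
  rw [sum_ginv_mul_DBel_eq g hinv]
  simp only [mul_add, Finset.sum_add_distrib, sum_ginv_mul_contractSecondFourth_eq_zero hdiv,
    sum_ginv_mul_contractExceptFirst_eq_zero hdiv,
    sum_ginv_mul_contractSecondFourth_eq_half hginv hR1 hDR1 hB2,
    sum_ginv_mul_contractExceptFirst_eq_half hginv hR1 hDR1 hB2]
  rw [contractExceptThird_comm hginv (DR β) R, contractAll_comm hginv (DR β) R]
  ring

/-- If `J_{λμβ} = ∇_λ R_{μβ} − ∇_μ R_{λβ} = 0` (in particular in any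
Einstein space, where `R_{μν} = Λ g_{μν}` with constant `Λ`), then the Bel tensor
is divergence-free: `∇_α B^{αβλμ} = 0` (stated equivalently with lowered free
indices, `∇^α B_{αβλμ} = 0`). -/
theorem bel_divergence_free_of_J_zero
    (g ginv : Fin 4 → Fin 4 → ℝ) (R : Fin 4 → Fin 4 → Fin 4 → Fin 4 → ℝ)
    (DR : Fin 4 → Fin 4 → Fin 4 → Fin 4 → Fin 4 → ℝ)
    (hg : ∀ a b, g a b = g b a) (hginv : ∀ a b, ginv a b = ginv b a)
    (hinv : ∀ a b, ∑ c, ginv a c * g c b = if a = b then 1 else 0)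
    (hR1 : ∀ a b c d, R a b c d = - R b a c d)
    (hR2 : ∀ a b c d, R a b c d = - R a b d c)
    (hR3 : ∀ a b c d, R a b c d = R c d a b)
    (hB1 : ∀ a b c d, R a b c d + R a c d b + R a d b c = 0)
    (hDR1 : ∀ n a b c d, DR n a b c d = - DR n b a c d)
    (hDR2 : ∀ n a b c d, DR n a b c d = - DR n a b d c)
    (hDR3 : ∀ n a b c d, DR n a b c d = DR n c d a b)
    (hB2 : ∀ n a b c d, DR n a b c d + DR a b n c d + DR b n a c d = 0)
    (hJ : ∀ l μ β, Jtensor ginv DR l μ β = 0) :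
    ∀ β l μ, ∑ α, ∑ α', ginv α α' * DBel g ginv R DR α α' β l μ = 0 :=
  bel_divergence_free_of_J_zero_general g ginv R DR hginv hinv hR1 hDR1 hDR3 hB2 hJ
end
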